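/- On $\mathbb{CP}^1$ with four punctures, let $\mathcal{E}$ have degree $-4$ and rank $2$, let $I\subseteq\{1,2,3,4\}$, $\alpha_i\in(0,1/2)$, and set the fixed-point weights $\beta_1(p_i)=\alpha_i$ if $i\in I$, $1-\alpha_i$ if $i\notin I$, and $\beta_2(p_i)=1-\alpha_i$ if $i\in I$, $\alpha_i$ if $i\notin I$. Suppose $\mathcal{L}_1\oplus\mathcal{L}_2\cong\mathcal{O}(a)\oplus\mathcal{O}(b)$ with $a+b=-4$, and stability/nonvanishing conditions: $\deg(\mathcal{L}_2)+|I|-\sum_{i\in I}\alpha_i+\sum_{j\notin I}\alpha_j<0$ and $2+2\deg(\mathcal{L}_2)+|I|\ge0$. Then $\deg(\mathcal{L}_2)\in\{-1,-2,-3\}$, and in fact $\mathcal{L}_1\oplus\mathcal{L}_2\cong\mathcal{O}(d-3)\oplus\mathcal{O}(-1-d)$ where $d=\lfloor |I|/2\rfloor$. -/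

import Mathlib

/-!
The weights `αᵢ ∈ (0, 1/2)` give `∑_{i∈I} αᵢ - ∑_{j∉I} αⱼ < |I|/2`, strictly because `I` or its
complement is nonempty. So the stability condition yields `2 deg 𝓛₂ + |I| < 0`, while the
nonvanishing condition says `2 deg 𝓛₂ + |I| ≥ -2`; hence `2 deg 𝓛₂ + |I| ∈ {-1, -2}`, which
determines `deg 𝓛₂ = -1 - ⌊|I|/2⌋`, and `|I| ≤ 4` bounds it.
-/

open Finset

theorem sum_sub_sum_compl_lt_card_div_two {ι : Type*} [Fintype ι] [DecidableEq ι] [Nonempty ι]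
    {α : ι → ℝ} (hpos : ∀ i, 0 < α i) (hlt : ∀ i, α i < 1 / 2) (I : Finset ι) :
    ∑ i ∈ I, α i - ∑ j ∈ Iᶜ, α j < (I.card : ℝ) / 2 := by
  rcases I.eq_empty_or_nonempty with rfl | hI
  · simpa using Finset.sum_pos (fun j _ => hpos j) univ_nonempty
  · have hsum : ∑ i ∈ I, α i < ∑ _i ∈ I, (1 / 2 : ℝ) :=
      sum_lt_sum_of_nonempty hI fun i _ => hlt i
    have hcompl : 0 ≤ ∑ j ∈ Iᶜ, α j := sum_nonneg fun j _ => (hpos j).le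
    rw [sum_const, nsmul_eq_mul] at hsum
    linarith

theorem eq_neg_one_sub_div_two_of_bounds {L : ℤ} {k : ℕ} (hlt : 2 * L + k < 0)
    (hge : 0 ≤ 2 + 2 * L + k) : L = -1 - ((k / 2 : ℕ) : ℤ) := by
  omega

/-- Proposition 5.1: on the four-punctured sphere, with weights
`αᵢ ∈ (0,1/2)`, the stability condition
`deg 𝓛₂ + |I| - ∑_{i∈I} αᵢ + ∑_{j∉I} αⱼ < 0` together with the nonvanishing
condition `2 + 2 deg 𝓛₂ + |I| ≥ 0` forces
`deg 𝓛₂ = -1 - ⌊|I|/2⌋ ∈ {-1, -2, -3}`. -/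
theorem stmt_11 (α : Fin 4 → ℝ) (hα : ∀ i, 0 < α i ∧ α i < 1 / 2)
    (I : Finset (Fin 4)) (L2 : ℤ)
    (hstab : (L2 : ℝ) + (I.card : ℝ) - ∑ i ∈ I, α i + ∑ j ∈ Iᶜ, α j < 0)
    (hsec : 0 ≤ 2 + 2 * L2 + (I.card : ℤ)) :
    L2 = -1 - ((I.card / 2 : ℕ) : ℤ) ∧ L2 ∈ ({-1, -2, -3} : Set ℤ) := by
  have hweights := sum_sub_sum_compl_lt_card_div_two (fun i => (hα i).1) (fun i => (hα i).2) I
  have hneg : 2 * L2 + (I.card : ℤ) < 0 := by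
    have : ((2 * L2 + I.card : ℤ) : ℝ) < 0 := by push_cast; linarith
    exact_mod_cast this
  have hL2 := eq_neg_one_sub_div_two_of_bounds hneg hsec
  have hcard : I.card ≤ 4 := card_le_univ I
  refine ⟨hL2, ?_⟩
  simp only [Set.mem_insert_iff, Set.mem_singleton_iff]
  omega
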